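/- arXiv:2511.06656 — 3 statements merged into one kernel-verified Lean document; each statement's English description precedes it below -/
import Mathlib

section
/- If G is a graph with bipartite independence number less than m (i.e., G is m-joined: every two disjoint vertex sets of size m have an edge between them), then every vertex subset U of G with |U| = 3m contains a subset inducing a connected subgraph of size at least m. -/
/-!
If every connected component of `G[U]` had fewer than `m` vertices, take a union `A` of components
that is minimal subject to `|A| ≥ m`. Dropping one component from `A` leaves fewer than `m`
vertices, so `|A| < 2m` and `|U \ A| > m`; but there is no edge between `A` and `U \ A`,
contradicting that `G` is `m`-joined.
-/

open Finset

namespace SimpleGraph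

variable {V : Type*} {G : SimpleGraph V} {m : ℕ}

def IsJoined (G : SimpleGraph V) (m : ℕ) : Prop :=
  ∀ S T : Finset V, Disjoint S T → #S = m → #T = m → ∃ a ∈ S, ∃ b ∈ T, G.Adj a b

def IsUnionOfComponents (G : SimpleGraph V) (A : Finset V) : Prop :=
  ∀ ⦃a b⦄, a ∈ A → G.Reachable a b → b ∈ A

namespace IsJoined

theorem pos (hG : G.IsJoined m) : 0 < m := by
  by_contra! hm
  obtain ⟨a, ha, -⟩ := hG ∅ ∅ (disjoint_empty_left _) (by simp; omega) (by simp; omega)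
  simp at ha

theorem exists_adj (hG : G.IsJoined m) {S T : Finset V} (hST : Disjoint S T) (hS : m ≤ #S)
    (hT : m ≤ #T) : ∃ a ∈ S, ∃ b ∈ T, G.Adj a b := by
  obtain ⟨S', hS'S, hS'⟩ := exists_subset_card_eq hS
  obtain ⟨T', hT'T, hT'⟩ := exists_subset_card_eq hT
  obtain ⟨a, ha, b, hb, hab⟩ := hG S' T' (hST.mono hS'S hT'T) hS' hT'
  exact ⟨a, hS'S ha, b, hT'T hb, hab⟩

theorem induce (hG : G.IsJoined m) (s : Set V) : (G.induce s).IsJoined m := by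
  intro S T hST hS hT
  obtain ⟨_, ha', _, hb', hab⟩ := hG (S.map (.subtype _)) (T.map (.subtype _))
    (disjoint_map _ |>.mpr hST) (by simpa) (by simpa)
  obtain ⟨a, ha, rfl⟩ := mem_map.mp ha'
  obtain ⟨b, hb, rfl⟩ := mem_map.mp hb'
  exact ⟨a, ha, b, hb, hab⟩

theorem card_compl_lt [Fintype V] [DecidableEq V] (hG : G.IsJoined m) {A : Finset V}
    (hA : G.IsUnionOfComponents A) (hm : m ≤ #A) : #Aᶜ < m := by
  by_contra! hAc
  obtain ⟨a, ha, b, hb, hab⟩ := hG.exists_adj disjoint_compl_right hm hAc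
  exact mem_compl.mp hb (hA ha hab.reachable)

end IsJoined

namespace IsUnionOfComponents

variable {A : Finset V}

theorem supp_subset (hA : G.IsUnionOfComponents A) {v : V} (hv : v ∈ A) :
    (G.connectedComponentMk v).supp ⊆ A :=
  fun _ hw ↦ hA hv (ConnectedComponent.exact hw).symm

theorem sdiff_supp [DecidableEq V] (hA : G.IsUnionOfComponents A) (c : G.ConnectedComponent)
    [Fintype c.supp] :
    G.IsUnionOfComponents (A \ c.supp.toFinset) := by
  intro a b ha hab
  simp only [mem_sdiff, Set.mem_toFinset, ConnectedComponent.mem_supp_iff] at ha ⊢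
  exact ⟨hA ha.1 hab, ConnectedComponent.sound hab ▸ ha.2⟩

end IsUnionOfComponents

theorem exists_isUnionOfComponents_card_lt_two_mul [Fintype V] (hm : 0 < m)
    (hV : m ≤ Fintype.card V) (hsmall : ∀ c : G.ConnectedComponent, c.supp.ncard < m) :
    ∃ A : Finset V, G.IsUnionOfComponents A ∧ m ≤ #A ∧ #A < 2 * m := by
  classical
  obtain ⟨A, hA, hmin⟩ := exists_min_image {A : Finset V | G.IsUnionOfComponents A ∧ m ≤ #A}
    card ⟨univ, mem_filter.mpr ⟨mem_univ _, fun _ _ _ _ ↦ mem_univ _, by simpa using hV⟩⟩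
  simp only [mem_filter, mem_univ, true_and] at hA hmin
  obtain ⟨hAc, hAm⟩ := hA
  obtain ⟨v, hv⟩ : A.Nonempty := card_pos.mp (by omega)
  set c := G.connectedComponentMk v
  have hvc : v ∈ c.supp.toFinset := by simp [c]
  have hcA : c.supp.toFinset ⊆ A := by simpa using hAc.supp_subset hv
  have hrest : #(A \ c.supp.toFinset) < m := by
    by_contra! h
    exact (hmin _ ⟨hAc.sdiff_supp c, h⟩).not_gt
      (card_lt_card ⟨sdiff_subset, fun h ↦ (mem_sdiff.mp (h hv)).2 hvc⟩)
  have hc : #c.supp.toFinset < m := Set.ncard_eq_toFinset_card' c.supp ▸ hsmall c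
  exact ⟨A, hAc, hAm, by rw [← card_sdiff_add_card_eq_card hcA]; omega⟩

theorem ConnectedComponent.connected_induce_image_val_supp {s : Set V}
    (c : (G.induce s).ConnectedComponent) : (G.induce (Subtype.val '' c.supp)).Connected := by
  refine c.connected_toSimpleGraph.map ⟨fun x ↦ ⟨x.1.1, x.1, x.2, rfl⟩, fun h ↦ h⟩ ?_
  rintro ⟨_, x, hx, rfl⟩
  exact ⟨⟨x, hx⟩, rfl⟩

end SimpleGraph

open SimpleGraph

open Classical in
theorem stmt0 {V : Type*} [Fintype V] (G : SimpleGraph V) (m : ℕ)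
    (hJ : ∀ S T : Finset V, Disjoint S T → S.card = m → T.card = m →
      ∃ a ∈ S, ∃ b ∈ T, G.Adj a b)
    (U : Finset V) (hU : U.card = 3 * m) :
    ∃ C ⊆ U, m ≤ C.card ∧ (G.induce (↑C : Set V)).Connected := by
  have hJU : (G.induce (U : Set V)).IsJoined m := IsJoined.induce hJ _
  by_cases hbig : ∃ c : (G.induce (U : Set V)).ConnectedComponent, m ≤ c.supp.ncard
  · obtain ⟨c, hc⟩ := hbig
    refine ⟨(Subtype.val '' c.supp).toFinset, ?_, ?_, ?_⟩
    · rintro _ hx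
      obtain ⟨x, -, rfl⟩ := Set.mem_toFinset.mp hx
      exact x.2
    · rwa [← Set.ncard_eq_toFinset_card', Set.ncard_image_of_injective _ Subtype.val_injective]
    · rw [Set.coe_toFinset]
      exact c.connected_induce_image_val_supp
  · push Not at hbig
    obtain ⟨A, hAcl, hmA, hA⟩ :=
      exists_isUnionOfComponents_card_lt_two_mul hJU.pos (by simp [hU]; omega) hbig
    have := hJU.card_compl_lt hAcl hmA
    simp only [card_compl, coe_sort_coe, Fintype.card_coe, hU] at this
    omega
end

section
/- Every n-vertex m-joined graph G contains a clique minor of order at least ⌊n/(3m)⌋. -/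
open Classical

namespace Stmt2Aux

variable {V : Type*} {G : SimpleGraph V}

/-- Transfer a walk with support in `T` to reachability in the induced graph. -/
lemma reachable_induce_of_walk {T : Set V} :
    ∀ {a b : V} (p : G.Walk a b), (∀ x ∈ p.support, x ∈ T) →
    ∀ (ha : a ∈ T) (hb : b ∈ T), (G.induce T).Reachable ⟨a, ha⟩ ⟨b, hb⟩ := by
  intro a b p
  induction p with
  | nil => intro _ ha hb; rfl
  | @cons a c b h p ih =>
    intro hsupp ha hb
    have hc : c ∈ T := hsupp c (by simp)
    have h1 : (G.induce T).Adj ⟨a, ha⟩ ⟨c, hc⟩ := by simpa using h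
    exact (h1.reachable).trans (ih (fun x hx => hsupp x (by simp [hx])) hc hb)

lemma singleton_connected (v : V) : (G.induce ({v} : Set V)).Connected := by
  rw [SimpleGraph.connected_iff]
  refine ⟨fun a b => ?_, ⟨⟨v, rfl⟩⟩⟩
  have ha : (↑a : V) = v := a.2
  have hb : (↑b : V) = v := b.2
  have hab : a = b := Subtype.ext (ha.trans hb.symm)
  rw [hab]

lemma insert_connected {S : Finset V} (hS : (G.induce (↑S : Set V)).Connected)
    {s x : V} (hs : s ∈ S) (hadj : G.Adj x s) :
    (G.induce (↑(insert x S) : Set V)).Connected := by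
  have hpair := SimpleGraph.induce_pair_connected_of_adj (G := G) hadj
  have h := SimpleGraph.induce_union_connected hpair.preconnected hS.preconnected
    ⟨s, by simp, by simpa using hs⟩
  have hset : ({x, s} ∪ (↑S : Set V)) = (↑(insert x S) : Set V) := by
    ext y; simp only [Set.mem_union, Set.mem_insert_iff, Set.mem_singleton_iff,
      Finset.coe_insert, Finset.mem_coe, Finset.mem_insert]
    constructor
    · rintro ((rfl | rfl) | hy)
      · exact Or.inl rfl
      · exact Or.inr hs
      · exact Or.inr hy
    · rintro (rfl | hy)
      · exact Or.inl (Or.inl rfl)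
      · exact Or.inr hy
  rwa [hset] at h

/-- From a walk in `G.induce T` starting outside `S` and ending in `S`,
get a crossing edge. -/
lemma cross_of_walk {T : Set V} {S : Finset V} :
    ∀ {a b : T} (_ : (G.induce T).Walk a b), (↑a : V) ∉ S → (↑b : V) ∈ S →
    ∃ x : V, x ∈ T ∧ x ∉ S ∧ ∃ s ∈ S, G.Adj x s := by
  intro a b p
  induction p with
  | nil => intro h1 h2; exact absurd h2 h1
  | @cons a c b h p ih =>
    intro ha hb
    by_cases hc : (↑c : V) ∈ S
    · exact ⟨a, a.2, ha, c, hc, by simpa using h⟩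
    · exact ih hc hb

lemma exists_crossing {C S : Finset V} (hSC : S ⊆ C)
    (hconn : (G.induce (↑C : Set V)).Connected)
    {c : V} (hc : c ∈ C) (hcS : c ∉ S) {s0 : V} (hs0 : s0 ∈ S) :
    ∃ x ∈ C, x ∉ S ∧ ∃ s ∈ S, G.Adj x s := by
  have hs0C : s0 ∈ C := hSC hs0
  obtain ⟨p⟩ := hconn.preconnected ⟨c, by simpa using hc⟩ ⟨s0, by simpa using hs0C⟩
  obtain ⟨x, hxT, hxS, hx⟩ := cross_of_walk p hcS hs0
  exact ⟨x, by simpa using hxT, hxS, hx⟩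

/-- Grow/trim: a connected finset of size ≥ m contains a connected subset of size m. -/
lemma exists_conn_subset {C : Finset V} (hC : (G.induce (↑C : Set V)).Connected) :
    ∀ m, 1 ≤ m → m ≤ C.card → ∃ S ⊆ C, S.card = m ∧ (G.induce (↑S : Set V)).Connected := by
  intro m
  induction m with
  | zero => omega
  | succ m ih =>
    intro _ hm
    by_cases hm0 : m = 0
    · subst hm0
      obtain ⟨v, hv⟩ := Finset.card_pos.mp (by omega : 0 < C.card)
      refine ⟨{v}, by simpa using hv, by simp, ?_⟩
      rw [Finset.coe_singleton]
      exact singleton_connected v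
    · obtain ⟨S, hSC, hScard, hSconn⟩ := ih (by omega) (by omega)
      have hne : S.Nonempty := Finset.card_pos.mp (by omega)
      obtain ⟨s0, hs0⟩ := hne
      have : ∃ c ∈ C, c ∉ S := by
        by_contra hcon
        push_neg at hcon
        have := Finset.card_le_card hcon
        omega
      obtain ⟨c, hc, hcS⟩ := this
      obtain ⟨x, hxC, hxS, s, hsS, hadj⟩ := exists_crossing hSC hC hc hcS hs0
      refine ⟨insert x S, Finset.insert_subset hxC hSC, ?_, insert_connected hSconn hsS hadj⟩
      rw [Finset.card_insert_of_notMem hxS, hScard]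

/-! ### Components within a vertex set -/

def ReachIn (G : SimpleGraph V) (U : Finset V) (u v : V) : Prop :=
  ∃ p : G.Walk u v, ∀ x ∈ p.support, x ∈ U

lemma ReachIn.symm {U : Finset V} {u v : V} (h : ReachIn G U u v) : ReachIn G U v u := by
  obtain ⟨p, hp⟩ := h
  exact ⟨p.reverse, fun x hx => hp x (by simpa [SimpleGraph.Walk.support_reverse] using hx)⟩

lemma ReachIn.trans {U : Finset V} {u v w : V} (h1 : ReachIn G U u v)
    (h2 : ReachIn G U v w) : ReachIn G U u w := by
  obtain ⟨p, hp⟩ := h1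
  obtain ⟨q, hq⟩ := h2
  refine ⟨p.append q, fun x hx => ?_⟩
  rw [SimpleGraph.Walk.mem_support_append_iff] at hx
  exact hx.elim (hp x) (hq x)

noncomputable def comp (G : SimpleGraph V) (U : Finset V) (v : V) : Finset V :=
  U.filter (ReachIn G U v)

lemma comp_subset {U : Finset V} {v : V} : comp G U v ⊆ U := Finset.filter_subset _ _

lemma mem_comp_self {U : Finset V} {v : V} (hv : v ∈ U) : v ∈ comp G U v := by
  refine Finset.mem_filter.mpr ⟨hv, SimpleGraph.Walk.nil, ?_⟩
  intro x hx; simp at hx; subst hx; exact hv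

lemma mem_comp_iff {U : Finset V} {v u : V} :
    u ∈ comp G U v ↔ u ∈ U ∧ ReachIn G U v u := Finset.mem_filter

lemma comp_eq_of_mem {U : Finset V} {v u : V} (hu : u ∈ comp G U v) :
    comp G U u = comp G U v := by
  obtain ⟨huU, hr⟩ := mem_comp_iff.mp hu
  ext x
  simp only [mem_comp_iff]
  exact ⟨fun ⟨hx, h⟩ => ⟨hx, hr.trans h⟩, fun ⟨hx, h⟩ => ⟨hx, hr.symm.trans h⟩⟩

lemma comp_closed {U : Finset V} {v a b : V} (ha : a ∈ comp G U v) (hb : b ∈ U)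
    (hadj : G.Adj a b) : b ∈ comp G U v := by
  obtain ⟨haU, p, hp⟩ := mem_comp_iff.mp ha
  refine mem_comp_iff.mpr ⟨hb, p.concat hadj, fun x hx => ?_⟩
  rw [SimpleGraph.Walk.support_concat] at hx
  rcases List.mem_append.mp hx with h | h
  · exact hp x h
  · simp at h; subst h; exact hb

lemma comp_connected {U : Finset V} {v : V} (hv : v ∈ U) :
    (G.induce (↑(comp G U v) : Set V)).Connected := by
  rw [SimpleGraph.connected_iff]
  refine ⟨?_, ⟨⟨v, by simpa using mem_comp_self hv⟩⟩⟩
  · rintro ⟨a, ha⟩ ⟨b, hb⟩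
    simp only [Finset.mem_coe] at ha hb
    obtain ⟨haU, p, hp⟩ := mem_comp_iff.mp ha
    obtain ⟨hbU, q, hq⟩ := mem_comp_iff.mp hb
    have hps : ∀ x ∈ p.support, x ∈ comp G U v := fun x hx =>
      mem_comp_iff.mpr ⟨hp x hx, p.takeUntil x hx,
        fun y hy => hp y (SimpleGraph.Walk.support_takeUntil_subset _ hx hy)⟩
    have hqs : ∀ x ∈ q.support, x ∈ comp G U v := fun x hx =>
      mem_comp_iff.mpr ⟨hq x hx, q.takeUntil x hx,
        fun y hy => hq y (SimpleGraph.Walk.support_takeUntil_subset _ hx hy)⟩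
    have := reachable_induce_of_walk (T := (↑(comp G U v) : Set V))
      (p.reverse.append q)
      (fun x hx => by
        rw [SimpleGraph.Walk.mem_support_append_iff] at hx
        rcases hx with hx | hx
        · exact hps x (by simpa [SimpleGraph.Walk.support_reverse] using hx)
        · exact hqs x hx)
      (by simpa using ha) (by simpa using hb)
    exact this

/-- Greedy partial-sums lemma. -/
lemma exists_subfamily_sum {α : Type*} {m : ℕ} (hm : 1 ≤ m) :
    ∀ s : Finset α, ∀ f : α → ℕ, (∀ a ∈ s, f a < m) → m ≤ ∑ a ∈ s, f a →
    ∃ t ⊆ s, m ≤ ∑ a ∈ t, f a ∧ ∑ a ∈ t, f a < 2 * m := by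
  intro s
  induction s using Finset.induction_on with
  | empty => intro f _ h; simp at h; omega
  | @insert a s ha ih =>
    intro f hf hsum
    rw [Finset.sum_insert ha] at hsum
    by_cases h : m ≤ ∑ x ∈ s, f x
    · obtain ⟨t, hts, h1, h2⟩ := ih f (fun x hx => hf x (by simp [hx])) h
      exact ⟨t, hts.trans (Finset.subset_insert a s), h1, h2⟩
    · refine ⟨insert a s, Finset.Subset.refl _, ?_, ?_⟩
      · rwa [Finset.sum_insert ha]
      · rw [Finset.sum_insert ha]
        have := hf a (by simp)
        omega

end Stmt2Aux

open Stmt2Aux in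
open Classical in
/-- Core lemma: find a connected subset of size ≥ m inside any U with |U| ≥ 3m. -/
lemma stmt2_core {V : Type*} (G : SimpleGraph V) (m : ℕ) (hm : 1 ≤ m)
    (hJ : ∀ S T : Finset V, Disjoint S T → S.card = m → T.card = m →
      ∃ a ∈ S, ∃ b ∈ T, G.Adj a b)
    (U : Finset V) (hU : 3 * m ≤ U.card) :
    ∃ C ⊆ U, m ≤ C.card ∧ (G.induce (↑C : Set V)).Connected := by
  by_cases hbig : ∃ v ∈ U, m ≤ (comp G U v).card
  · obtain ⟨v, hv, hcard⟩ := hbig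
    exact ⟨comp G U v, comp_subset, hcard, comp_connected hv⟩
  · exfalso
    push_neg at hbig
    set 𝒞 : Finset (Finset V) := U.image (comp G U) with h𝒞
    have hdisj : ∀ C1 ∈ 𝒞, ∀ C2 ∈ 𝒞, C1 ≠ C2 → Disjoint C1 C2 := by
      intro C1 h1 C2 h2 hne
      obtain ⟨v1, hv1, rfl⟩ := Finset.mem_image.mp h1
      obtain ⟨v2, hv2, rfl⟩ := Finset.mem_image.mp h2
      rw [Finset.disjoint_left]
      intro x hx1 hx2
      exact hne ((comp_eq_of_mem hx1).symm.trans (comp_eq_of_mem hx2))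
    have hcover : U = 𝒞.biUnion id := by
      ext u
      simp only [Finset.mem_biUnion, h𝒞, Finset.mem_image, id]
      constructor
      · intro hu; exact ⟨comp G U u, ⟨u, hu, rfl⟩, mem_comp_self hu⟩
      · rintro ⟨C, ⟨v, hv, rfl⟩, hu⟩; exact comp_subset hu
    have hsum : ∑ C ∈ 𝒞, C.card = U.card := by
      conv_rhs => rw [hcover]
      exact (Finset.card_biUnion hdisj).symm
    have hlt : ∀ C ∈ 𝒞, C.card < m := by
      intro C hC
      obtain ⟨v, hv, rfl⟩ := Finset.mem_image.mp hC
      have := hbig v hv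
      omega
    obtain ⟨t, ht𝒞, htm, ht2m⟩ := exists_subfamily_sum hm 𝒞 Finset.card hlt
      (by omega)
    set A : Finset V := t.biUnion id with hA
    have hAcard : A.card = ∑ C ∈ t, C.card :=
      Finset.card_biUnion (fun C1 h1 C2 h2 hne => hdisj C1 (ht𝒞 h1) C2 (ht𝒞 h2) hne)
    have hAU : A ⊆ U := by
      intro x hx
      obtain ⟨C, hC, hxC⟩ := Finset.mem_biUnion.mp hx
      obtain ⟨v, hv, rfl⟩ := Finset.mem_image.mp (ht𝒞 hC)
      exact comp_subset hxC
    have hUA : m ≤ (U \ A).card := by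
      have := Finset.card_sdiff_add_card_eq_card hAU
      omega
    obtain ⟨S, hSA, hScard⟩ := Finset.exists_subset_card_eq (by omega : m ≤ A.card)
    obtain ⟨T, hTA, hTcard⟩ := Finset.exists_subset_card_eq hUA
    have hST : Disjoint S T := by
      rw [Finset.disjoint_left]
      intro x hxS hxT
      exact (Finset.mem_sdiff.mp (hTA hxT)).2 (hSA hxS)
    obtain ⟨a, haS, b, hbT, hadj⟩ := hJ S T hST hScard hTcard
    have haA : a ∈ A := hSA haS
    have hbUA := Finset.mem_sdiff.mp (hTA hbT)
    obtain ⟨C, hCt, haC⟩ := Finset.mem_biUnion.mp haA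
    obtain ⟨v, hv, rfl⟩ := Finset.mem_image.mp (ht𝒞 hCt)
    have : b ∈ comp G U v := comp_closed haC hbUA.1 hadj
    exact hbUA.2 (Finset.mem_biUnion.mpr ⟨_, hCt, this⟩)

open Stmt2Aux in
open Classical in
lemma stmt2_main {V : Type*} (G : SimpleGraph V) (m : ℕ) (hm : 1 ≤ m)
    (hJ : ∀ S T : Finset V, Disjoint S T → S.card = m → T.card = m →
      ∃ a ∈ S, ∃ b ∈ T, G.Adj a b) :
    ∀ k (U : Finset V), 3 * m * k ≤ U.card →
    ∃ B : Fin k → Finset V, (∀ i, B i ⊆ U) ∧ (∀ i, (B i).card = m) ∧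
      (∀ i, (G.induce (↑(B i) : Set V)).Connected) ∧
      (∀ i j, i ≠ j → Disjoint (B i) (B j)) := by
  intro k
  induction k with
  | zero =>
    intro U _
    exact ⟨Fin.elim0, fun i => i.elim0, fun i => i.elim0, fun i => i.elim0,
      fun i => i.elim0⟩
  | succ k ih =>
    intro U hU
    have h3m : 3 * m ≤ U.card := by nlinarith
    obtain ⟨C, hCU, hCm, hCconn⟩ := stmt2_core G m hm hJ U h3m
    obtain ⟨S, hSC, hScard, hSconn⟩ := exists_conn_subset hCconn m hm hCm
    have hSU : S ⊆ U := hSC.trans hCU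
    have hU' : 3 * m * k ≤ (U \ S).card := by
      have := Finset.card_sdiff_add_card_eq_card hSU
      have : (U \ S).card = U.card - m := by omega
      have h1 : 3 * m * (k + 1) = 3 * m * k + 3 * m := by ring
      omega
    obtain ⟨B', hB'U, hB'card, hB'conn, hB'disj⟩ := ih (U \ S) hU'
    refine ⟨Fin.cons S B', ?_, ?_, ?_, ?_⟩
    · intro i
      induction i using Fin.cases with
      | zero => simpa using hSU
      | succ j => simpa using (hB'U j).trans (Finset.sdiff_subset)
    · intro i
      induction i using Fin.cases with
      | zero => simpa using hScard
      | succ j => simpa using hB'card j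
    · intro i
      induction i using Fin.cases with
      | zero => rw [Fin.cons_zero]; exact hSconn
      | succ j => rw [Fin.cons_succ]; exact hB'conn j
    · intro i j hne
      have hdSB : ∀ j, Disjoint S (B' j) := by
        intro j
        rw [Finset.disjoint_left]
        intro x hxS hxB
        exact (Finset.mem_sdiff.mp (hB'U j hxB)).2 hxS
      induction i using Fin.cases with
      | zero =>
        induction j using Fin.cases with
        | zero => exact absurd rfl hne
        | succ j' => simpa using hdSB j'
      | succ i' =>
        induction j using Fin.cases with
        | zero => simpa using (hdSB i').symm
        | succ j' =>
          have : i' ≠ j' := fun h => hne (by rw [h])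
          simpa using hB'disj i' j' this

open Classical in
theorem stmt2 {V : Type*} [Fintype V] (G : SimpleGraph V) (n m : ℕ)
    (hn : Fintype.card V = n)
    (hJ : ∀ S T : Finset V, Disjoint S T → S.card = m → T.card = m →
      ∃ a ∈ S, ∃ b ∈ T, G.Adj a b) :
    ∃ B : Fin (n / (3 * m)) → Finset V,
      (∀ i j, i ≠ j → Disjoint (B i) (B j)) ∧
      (∀ i, (G.induce (↑(B i) : Set V)).Connected) ∧
      (∀ i j, i ≠ j → ∃ a ∈ B i, ∃ b ∈ B j, G.Adj a b) := by
  rcases Nat.eq_zero_or_pos m with rfl | hm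
  · have h0 : n / (3 * 0) = 0 := by simp
    rw [h0]
    exact ⟨Fin.elim0, fun i => i.elim0, fun i => i.elim0, fun i => i.elim0⟩
  · have hk : 3 * m * (n / (3 * m)) ≤ (Finset.univ : Finset V).card := by
      rw [Finset.card_univ, hn]
      exact Nat.mul_div_le n (3 * m)
    obtain ⟨B, _, hcard, hconn, hdisj⟩ := stmt2_main G m hm hJ (n / (3 * m))
      Finset.univ hk
    refine ⟨B, hdisj, hconn, fun i j hne => ?_⟩
    exact hJ (B i) (B j) (hdisj i j hne) (hcard i) (hcard j)
end

section
/- Let G be an n-vertex m-joined graph with n > 3m, and set α = (n − 3m)/(2n) and t = (n − 3m)/(2m). Then there exists a set X₀ ⊆ V(G) with |X₀| < m such that the induced subgraph H = G − X₀ is an (α, t)-expander; consequently |V(H)| > n − m and H is m-joined. -/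
open Classical in
theorem stmt5 {V : Type*} [Fintype V] (G : SimpleGraph V) (n m : ℕ)
    (hn : Fintype.card V = n) (hm : 0 < m) (hnm : 3 * m < n)
    (hJ : ∀ S T : Finset V, Disjoint S T → S.card = m → T.card = m →
      ∃ a ∈ S, ∃ b ∈ T, G.Adj a b) :
    ∃ X₀ : Finset V, X₀.card < m ∧
      -- H = G - X₀ is an (α, t)-expander with α = (n-3m)/(2n), t = (n-3m)/(2m)
      (∀ Y : Finset V, Y ⊆ X₀ᶜ →
        (Y.card : ℝ) ≤ (((n : ℝ) - 3 * m) / (2 * n)) * ((n : ℝ) - X₀.card)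
            / (((n : ℝ) - 3 * m) / (2 * m)) →
        (((n : ℝ) - 3 * m) / (2 * m)) * Y.card ≤
          ((Finset.univ.filter (fun u => u ∉ X₀ ∧ u ∉ Y ∧ ∃ v ∈ Y, G.Adj u v)).card : ℝ)) ∧
      -- |V(H)| > n - m
      n - m < n - X₀.card ∧
      -- H is m-joined
      (∀ S T : Finset V, S ⊆ X₀ᶜ → T ⊆ X₀ᶜ → Disjoint S T → S.card = m → T.card = m →
        ∃ a ∈ S, ∃ b ∈ T, G.Adj a b) := by
  classical
  set N : Finset V → Finset V :=
    fun X => Finset.univ.filter (fun u => u ∉ X ∧ ∃ v ∈ X, G.Adj u v) with hNdef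
  set t : ℝ := ((n : ℝ) - 3 * m) / (2 * m) with htdef
  have hm' : (0 : ℝ) < m := by exact_mod_cast hm
  have hn3 : (3 : ℝ) * m < n := by exact_mod_cast hnm
  have hn0 : (0 : ℝ) < n := by linarith
  have ht0 : 0 < t := div_pos (by linarith) (by linarith)
  -- core lemma from m-joinedness
  have core : ∀ X : Finset V, m ≤ X.card → (n : ℝ) - m - X.card < (N X).card := by
    intro X hX
    by_contra hcon
    push_neg at hcon
    have hdisj : Disjoint X (N X) := by
      rw [Finset.disjoint_left]
      intro a haX haN
      rw [hNdef] at haN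
      simp only [Finset.mem_filter] at haN
      exact haN.2.1 haX
    have hcardU : (X ∪ N X).card = X.card + (N X).card :=
      Finset.card_union_of_disjoint hdisj
    have hUle : (X ∪ N X).card ≤ n := hn ▸ Finset.card_le_univ _
    have hnat : X.card + (N X).card + m ≤ n := by
      have : (X.card : ℝ) + (N X).card + m ≤ n := by linarith
      exact_mod_cast this
    have hcompl : ((X ∪ N X)ᶜ).card = n - (X.card + (N X).card) := by
      rw [Finset.card_compl, hcardU, hn]
    have hmle : m ≤ ((X ∪ N X)ᶜ).card := by omega
    obtain ⟨T, hT, hTc⟩ := Finset.exists_subset_card_eq hmle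
    obtain ⟨S, hS, hSc⟩ := Finset.exists_subset_card_eq hX
    have hdST : Disjoint S T := by
      rw [Finset.disjoint_left]
      intro a haS haT
      have h1 : a ∈ X := hS haS
      have h2 := hT haT
      rw [Finset.mem_compl, Finset.mem_union] at h2
      exact h2 (Or.inl h1)
    obtain ⟨a, haS, b, hbT, hab⟩ := hJ S T hdST hSc hTc
    have hbC := hT hbT
    rw [Finset.mem_compl, Finset.mem_union] at hbC
    push_neg at hbC
    apply hbC.2
    rw [hNdef]
    simp only [Finset.mem_filter, Finset.mem_univ, true_and]
    exact ⟨hbC.1, a, hS haS, hab.symm⟩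
  -- choose a maximal bad set
  have hchoice : ∃ X₀ : Finset V, X₀.card ≤ m ∧ ((N X₀).card : ℝ) ≤ t * X₀.card ∧
      ∀ X : Finset V, X.card ≤ m → ((N X).card : ℝ) < t * X.card → X.card ≤ X₀.card := by
    by_cases hP : ∃ X : Finset V, X.card ≤ m ∧ ((N X).card : ℝ) < t * X.card
    · set s : Finset (Finset V) :=
        Finset.univ.filter (fun X : Finset V => X.card ≤ m ∧ ((N X).card : ℝ) < t * X.card)
        with hsdef
      have hsne : s.Nonempty := by
        obtain ⟨X, h1, h2⟩ := hP
        exact ⟨X, by simp [hsdef, h1, h2]⟩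
      obtain ⟨X₀, hX₀s, hmax⟩ := Finset.exists_max_image s Finset.card hsne
      rw [hsdef, Finset.mem_filter] at hX₀s
      refine ⟨X₀, hX₀s.2.1, hX₀s.2.2.le, fun X h1 h2 => hmax X ?_⟩
      simp [hsdef, h1, h2]
    · refine ⟨∅, Nat.zero_le _, ?_, ?_⟩
      · have hNe : N ∅ = ∅ := by
          rw [hNdef]
          simp
        simp [hNe]
      · intro X h1 h2
        exact absurd ⟨X, h1, h2⟩ hP
  obtain ⟨X₀, hc, h2, h3⟩ := hchoice
  have htm : t * (m : ℝ) = ((n : ℝ) - 3 * m) / 2 := by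
    rw [htdef]
    field_simp
  have hlt : X₀.card < m := by
    rcases lt_or_eq_of_le hc with h | h
    · exact h
    · exfalso
      have hcore := core X₀ (le_of_eq h.symm)
      rw [h] at h2
      rw [htm] at h2
      have : ((X₀.card : ℝ)) = m := by exact_mod_cast h
      rw [this] at hcore
      linarith
  refine ⟨X₀, hlt, ?_, by omega, fun S T _ _ hd hSc hTc => hJ S T hd hSc hTc⟩
  intro Y hY hYle
  rcases Y.eq_empty_or_nonempty with rfl | hYne
  · simp
  · by_contra hcon
    push_neg at hcon
    set M : Finset V :=
      Finset.univ.filter (fun u => u ∉ X₀ ∧ u ∉ Y ∧ ∃ v ∈ Y, G.Adj u v) with hMdef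
    set X : Finset V := X₀ ∪ Y with hXdef
    have hdisjXY : Disjoint X₀ Y := by
      rw [Finset.disjoint_left]
      intro a ha haY
      have := hY haY
      rw [Finset.mem_compl] at this
      exact this ha
    have hcardX : X.card = X₀.card + Y.card := Finset.card_union_of_disjoint hdisjXY
    -- N X ⊆ N X₀ ∪ M
    have hsub : N X ⊆ N X₀ ∪ M := by
      intro u hu
      rw [hNdef] at hu
      simp only [Finset.mem_filter, Finset.mem_univ, true_and] at hu
      obtain ⟨huX, v, hvX, hadj⟩ := hu
      rw [hXdef, Finset.mem_union] at huX hvX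
      push_neg at huX
      rw [Finset.mem_union]
      rcases hvX with hv | hv
      · left
        rw [hNdef]
        simp only [Finset.mem_filter, Finset.mem_univ, true_and]
        exact ⟨huX.1, v, hv, hadj⟩
      · right
        rw [hMdef]
        simp only [Finset.mem_filter, Finset.mem_univ, true_and]
        exact ⟨huX.1, huX.2, v, hv, hadj⟩
    have hNX : ((N X).card : ℝ) < t * X.card := by
      have h1 : (N X).card ≤ (N X₀).card + M.card :=
        le_trans (Finset.card_le_card hsub) (Finset.card_union_le _ _)
      have h1' : ((N X).card : ℝ) ≤ ((N X₀).card : ℝ) + M.card := by exact_mod_cast h1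
      have hXc : ((X.card : ℝ)) = X₀.card + Y.card := by exact_mod_cast hcardX
      calc ((N X).card : ℝ) ≤ ((N X₀).card : ℝ) + M.card := h1'
        _ < t * X₀.card + t * Y.card := by
            apply add_lt_add_of_le_of_lt h2
            exact hcon
        _ = t * X.card := by rw [hXc]; ring
    -- bound on Y.card
    have hYm : Y.card ≤ m := by
      have heq : (((n : ℝ) - 3 * m) / (2 * n)) * ((n : ℝ) - X₀.card) / t
          = (m : ℝ) * ((n : ℝ) - X₀.card) / n := by
        have hne : ((n : ℝ) - 3 * m) ≠ 0 := by linarith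
        rw [htdef]
        field_simp [hne]
      have hcn : (X₀.card : ℝ) ≥ 0 := Nat.cast_nonneg _
      have hle : (m : ℝ) * ((n : ℝ) - X₀.card) / n ≤ m := by
        rw [div_le_iff₀ hn0]
        nlinarith
      have : (Y.card : ℝ) ≤ m := by
        rw [htdef] at hYle
        rw [← htdef] at hYle
        calc (Y.card : ℝ) ≤ _ := hYle
          _ = (m : ℝ) * ((n : ℝ) - X₀.card) / n := heq
          _ ≤ m := hle
      exact_mod_cast this
    rcases le_or_gt X.card m with hXm | hXm
    · have := h3 X hXm hNX
      have hY1 : 1 ≤ Y.card := Finset.card_pos.mpr hYne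
      omega
    · have hcore := core X hXm.le
      have hX2m : X.card ≤ 2 * m - 1 := by omega
      have hX2m' : (X.card : ℝ) ≤ 2 * (m : ℝ) - 1 := by
        have : (X.card : ℝ) ≤ ((2 * m - 1 : ℕ) : ℝ) := by exact_mod_cast hX2m
        have h2m1 : ((2 * m - 1 : ℕ) : ℝ) = 2 * (m : ℝ) - 1 := by
          have : 1 ≤ 2 * m := by omega
          push_cast [this]
          ring
        linarith [h2m1 ▸ this]
      have ht2m : t * (2 * (m : ℝ)) = (n : ℝ) - 3 * m := by
        rw [htdef]
        field_simp
      have htx : t * (X.card : ℝ) ≤ (n : ℝ) - 3 * m := by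
        have : t * (X.card : ℝ) ≤ t * (2 * (m : ℝ)) := by
          apply mul_le_mul_of_nonneg_left _ ht0.le
          linarith
        linarith [ht2m ▸ this]
      linarith
end
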